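/- arXiv:1707.07403 — 2 statements merged into one kernel-verified Lean document; each statement's English description precedes it below -/
import Mathlib

section
/- Let A : ℝ^p ⇉ ℝ^p be monotone, Q symmetric positive definite, t > 0, and z̄₊ the exact solution of 0 ∈ t(g + Q(w - z)) + A(w) (for fixed vectors g, z). Suppose z₊ satisfies e ∈ t(g + Q(z₊ - z)) + A(z₊) for some e with ‖e‖*_Q ≤ tδ, where ‖e‖*_Q := ⟨Q⁻¹e, e⟩^{1/2}. Then ‖z₊ - z̄₊‖_Q ≤ δ. -/
/-!
Subtracting the two inclusions and using monotonicity of `A` gives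
`t ‖z₊ - z̄₊‖²_Q ≤ ⟨e, z₊ - z̄₊⟩`. The Cauchy–Schwarz inequality for the dual pair of norms
`‖·‖*_Q`, `‖·‖_Q` bounds the right-hand side by `‖e‖*_Q ‖z₊ - z̄₊‖_Q ≤ t δ ‖z₊ - z̄₊‖_Q`.
-/

open Matrix

/-- Weighted norm `‖u‖_H := ⟨H u, u⟩^{1/2}`. -/
noncomputable def wnorm {p : ℕ} (H : Matrix (Fin p) (Fin p) ℝ) (u : Fin p → ℝ) : ℝ :=
  Real.sqrt ((H *ᵥ u) ⬝ᵥ u)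

/-- A multivalued operator `A : ℝ^p ⇉ ℝ^p` is monotone. -/
def MonotoneOp {p : ℕ} (A : (Fin p → ℝ) → Set (Fin p → ℝ)) : Prop :=
  ∀ z1 z2 w1 w2 : Fin p → ℝ, w1 ∈ A z1 → w2 ∈ A z2 → 0 ≤ (w1 - w2) ⬝ᵥ (z1 - z2)

theorem Matrix.PosSemidef.dotProduct_mulVec_sq_le {n : Type*} [Fintype n]
    {M : Matrix n n ℝ} (hM : M.PosSemidef) (x y : n → ℝ) :
    (x ⬝ᵥ M *ᵥ y) ^ 2 ≤ (x ⬝ᵥ M *ᵥ x) * (y ⬝ᵥ M *ᵥ y) := by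
  classical
  have hsymm : (toBilin' M).IsSymm :=
    isSymm_toBilin'_iff_isSymm.mpr (isHermitian_iff_isSymm.mp hM.isHermitian)
  simpa only [toBilin'_apply'] using (toBilin' M).apply_sq_le_of_symm
    (fun v ↦ by simpa [toBilin'_apply'] using hM.dotProduct_mulVec_nonneg v)
    (LinearMap.BilinForm.isSymm_iff.mp hsymm) x y

theorem wnorm_nonneg {p : ℕ} (H : Matrix (Fin p) (Fin p) ℝ) (u : Fin p → ℝ) : 0 ≤ wnorm H u :=
  Real.sqrt_nonneg _

theorem wnorm_sq {p : ℕ} {H : Matrix (Fin p) (Fin p) ℝ} (hH : H.PosSemidef) (u : Fin p → ℝ) :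
    wnorm H u ^ 2 = (H *ᵥ u) ⬝ᵥ u :=
  Real.sq_sqrt (by simpa [dotProduct_comm] using hH.dotProduct_mulVec_nonneg u)

theorem dotProduct_le_wnorm_inv_mul_wnorm {p : ℕ} {Q : Matrix (Fin p) (Fin p) ℝ} (hQ : Q.PosDef)
    (e u : Fin p → ℝ) : e ⬝ᵥ u ≤ wnorm Q⁻¹ e * wnorm Q u := by
  -- With `v = Q⁻¹ e`, all three quantities are values of the form `x ⬝ᵥ Q *ᵥ y`.
  set v := Q⁻¹ *ᵥ e
  have hQv : Q *ᵥ v = e := by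
    rw [mulVec_mulVec, mul_nonsing_inv _ ((isUnit_iff_isUnit_det _).mp hQ.isUnit), one_mulVec]
  have hsymm : Qᵀ = Q := isHermitian_iff_isSymm.mp hQ.isHermitian
  have hdot : e ⬝ᵥ u = v ⬝ᵥ Q *ᵥ u := by
    rw [dotProduct_mulVec, ← hsymm, vecMul_transpose, hQv]
  have hcs := hQ.posSemidef.dotProduct_mulVec_sq_le v u
  have hvv : 0 ≤ v ⬝ᵥ Q *ᵥ v := by simpa using hQ.posSemidef.dotProduct_mulVec_nonneg v
  calc e ⬝ᵥ u = v ⬝ᵥ Q *ᵥ u := hdot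
    _ ≤ √((v ⬝ᵥ Q *ᵥ v) * (u ⬝ᵥ Q *ᵥ u)) := (le_abs_self _).trans (Real.abs_le_sqrt hcs)
    _ = wnorm Q⁻¹ e * wnorm Q u := by rw [Real.sqrt_mul hvv, wnorm, wnorm, hQv, dotProduct_comm u]

theorem MonotoneOp.mul_dotProduct_mulVec_le_dotProduct {p : ℕ} {A : (Fin p → ℝ) → Set (Fin p → ℝ)}
    (hA : MonotoneOp A) (Q : Matrix (Fin p) (Fin p) ℝ) (t : ℝ) (g z zbar zplus e : Fin p → ℝ)
    (hexact : -(t • (g + Q *ᵥ (zbar - z))) ∈ A zbar)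
    (happrox : e - t • (g + Q *ᵥ (zplus - z)) ∈ A zplus) :
    t * ((Q *ᵥ (zplus - zbar)) ⬝ᵥ (zplus - zbar)) ≤ e ⬝ᵥ (zplus - zbar) := by
  have hdiff : e - t • (g + Q *ᵥ (zplus - z)) - -(t • (g + Q *ᵥ (zbar - z)))
      = e - t • (Q *ᵥ (zplus - zbar)) := by
    simp only [mulVec_sub, smul_add, smul_sub]
    abel
  have hmono := hA _ _ _ _ happrox hexact
  rw [hdiff, sub_dotProduct, smul_dotProduct, smul_eq_mul] at hmono
  linarith

theorem inexact_solution_distance_general {p : ℕ}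
    (Q : Matrix (Fin p) (Fin p) ℝ) (hQ : Q.PosDef)
    (A : (Fin p → ℝ) → Set (Fin p → ℝ)) (hA : MonotoneOp A)
    (t δ : ℝ) (ht : 0 < t)
    (g z zbar zplus e : Fin p → ℝ)
    (hexact : -(t • (g + Q *ᵥ (zbar - z))) ∈ A zbar)
    (happrox : e - t • (g + Q *ᵥ (zplus - z)) ∈ A zplus)
    (he : wnorm Q⁻¹ e ≤ t * δ) :
    wnorm Q (zplus - zbar) ≤ δ := by
  set a := wnorm Q (zplus - zbar)
  have ha : 0 ≤ a := wnorm_nonneg _ _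
  have hδ : 0 ≤ δ := nonneg_of_mul_nonneg_right ((wnorm_nonneg _ _).trans he) ht
  have key : t * a ^ 2 ≤ t * (δ * a) := calc
    t * a ^ 2 = t * ((Q *ᵥ (zplus - zbar)) ⬝ᵥ (zplus - zbar)) := by rw [wnorm_sq hQ.posSemidef]
    _ ≤ e ⬝ᵥ (zplus - zbar) := hA.mul_dotProduct_mulVec_le_dotProduct Q t g z zbar zplus e hexact happrox
    _ ≤ wnorm Q⁻¹ e * a := dotProduct_le_wnorm_inv_mul_wnorm hQ e _
    _ ≤ t * δ * a := mul_le_mul_of_nonneg_right he ha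
    _ = t * (δ * a) := mul_assoc _ _ _
  nlinarith [le_of_mul_le_mul_left key ht]

/-- An inexact solution `z₊` of the linearized inclusion (with residual `e`,
`‖e‖*_Q ≤ tδ`) satisfies `‖z₊ - z̄₊‖_Q ≤ δ`, where `z̄₊` is the exact solution. -/
theorem inexact_solution_distance {p : ℕ}
    (Q : Matrix (Fin p) (Fin p) ℝ) (hQ : Q.PosDef)
    (A : (Fin p → ℝ) → Set (Fin p → ℝ)) (hA : MonotoneOp A)
    (t δ : ℝ) (ht : 0 < t) (hδ : 0 ≤ δ)
    (g z zbar zplus e : Fin p → ℝ)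
    (hexact : -(t • (g + Q *ᵥ (zbar - z))) ∈ A zbar)
    (happrox : e - t • (g + Q *ᵥ (zplus - z)) ∈ A zplus)
    (he : wnorm Q⁻¹ e ≤ t * δ) :
    wnorm Q (zplus - zbar) ≤ δ :=
  inexact_solution_distance_general Q hQ A hA t δ ht g z zbar zplus e hexact happrox he
end

section
/- Let g : ℝ^p → ℝ ∪ {+∞} be proper, closed and convex, b ∈ ℝ^p, and define ψ(y) := g*(y) + ⟨b, y⟩ where g* is the Fenchel conjugate of g. For a symmetric positive definite matrix M and a proper closed convex h, let prox_{M h}(x) := argmin_u { h(u) + (1/2)‖u - x‖²_{M⁻¹} }, i.e. the unique w with 0 ∈ M⁻¹(w - x) + ∂h(w). Then for any symmetric positive definite matrix Q, the scaled proximal operator of ψ satisfies prox_{Qψ}(y) = y - Qb - Q · prox_{Q⁻¹ g}(Q⁻¹ y - b). -/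
open Matrix

/-- Subdifferential of an extended-real-valued function on `ℝ^p`. -/
def subdiff {p : ℕ} (g : (Fin p → ℝ) → EReal) (x : Fin p → ℝ) : Set (Fin p → ℝ) :=
  {w | ∀ u : Fin p → ℝ, g x + ((w ⬝ᵥ (u - x) : ℝ) : EReal) ≤ g u}

/-- Fenchel conjugate `g*(u) := sup_s ⟨u, s⟩ - g(s)`. -/
noncomputable def fconj {p : ℕ} (g : (Fin p → ℝ) → EReal) (u : Fin p → ℝ) : EReal :=
  ⨆ s : Fin p → ℝ, (((u ⬝ᵥ s : ℝ) : EReal) - g s)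

/-- For `ψ(y) := g*(y) + ⟨b, y⟩`, the scaled proximal operator of `ψ` (characterized by
`0 ∈ Q⁻¹(w - y) + ∂ψ(w)`) satisfies
`prox_{Qψ}(y) = y - Qb - Q·prox_{Q⁻¹g}(Q⁻¹y - b)`,
where `x := prox_{Q⁻¹g}(Q⁻¹y - b)` is characterized by `0 ∈ Q(x - (Q⁻¹y - b)) + ∂g(x)`. -/
theorem prox_of_conjugate_shifted {p : ℕ}
    (g : (Fin p → ℝ) → EReal)
    (hproper_top : ∃ x, g x ≠ ⊤) (hproper_bot : ∀ x, g x ≠ ⊥)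
    (hclosed : LowerSemicontinuous g)
    (hconvex : ∀ x y : Fin p → ℝ, ∀ a b : ℝ, 0 ≤ a → 0 ≤ b → a + b = 1 →
      g (a • x + b • y) ≤ (a : EReal) * g x + (b : EReal) * g y)
    (b : Fin p → ℝ)
    (Q : Matrix (Fin p) (Fin p) ℝ) (hQ : Q.PosDef)
    (y x : Fin p → ℝ)
    (hx : -(Q *ᵥ (x - (Q⁻¹ *ᵥ y - b))) ∈ subdiff g x) :
    (-(Q⁻¹ *ᵥ ((y - Q *ᵥ b - Q *ᵥ x) - y)) ∈
        subdiff (fun yy => fconj g yy + ((b ⬝ᵥ yy : ℝ) : EReal)) (y - Q *ᵥ b - Q *ᵥ x)) ∧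
    (∀ w : Fin p → ℝ,
      -(Q⁻¹ *ᵥ (w - y)) ∈ subdiff (fun yy => fconj g yy + ((b ⬝ᵥ yy : ℝ) : EReal)) w →
      w = y - Q *ᵥ b - Q *ᵥ x) := by
  obtain ⟨s₀, hs₀⟩ := hproper_top
  obtain ⟨w₀, hw₀⟩ : ∃ w₀, w₀ = y - Q *ᵥ b - Q *ᵥ x := ⟨_, rfl⟩
  rw [show y - Q *ᵥ b - Q *ᵥ x = w₀ from hw₀.symm]
  have hQdet : IsUnit Q.det := (Matrix.isUnit_iff_isUnit_det Q).mp hQ.isUnit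
  have hQinv : ∀ v, Q⁻¹ *ᵥ (Q *ᵥ v) = v := by
    intro v
    rw [Matrix.mulVec_mulVec, Matrix.nonsing_inv_mul Q hQdet, Matrix.one_mulVec]
  have hQQinv : ∀ v, Q *ᵥ (Q⁻¹ *ᵥ v) = v := by
    intro v
    rw [Matrix.mulVec_mulVec, Matrix.mul_nonsing_inv Q hQdet, Matrix.one_mulVec]
  -- hx rewritten
  have hxw : w₀ ∈ subdiff g x := by
    have hv : -(Q *ᵥ (x - (Q⁻¹ *ᵥ y - b))) = w₀ := by
      rw [hw₀, Matrix.mulVec_sub, Matrix.mulVec_sub, hQQinv]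
      abel
    rwa [hv] at hx
  -- g x is real
  have hgx_ne_top : g x ≠ ⊤ := by
    intro h
    have h1 := hxw s₀
    rw [h, EReal.top_add_coe] at h1
    exact hs₀ (top_le_iff.mp h1)
  obtain ⟨gx, hgx⟩ : ∃ r : ℝ, g x = (r : EReal) :=
    ⟨(g x).toReal, (EReal.coe_toReal hgx_ne_top (hproper_bot x)).symm⟩
  -- fconj upper bound at w₀
  have hub : ∀ s, ((w₀ ⬝ᵥ s : ℝ) : EReal) - g s ≤ ((w₀ ⬝ᵥ x - gx : ℝ) : EReal) := by
    intro s
    rcases eq_or_ne (g s) ⊤ with h | h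
    · rw [h]; simp
    · obtain ⟨gs, hgs⟩ : ∃ r : ℝ, g s = (r : EReal) :=
        ⟨(g s).toReal, (EReal.coe_toReal h (hproper_bot s)).symm⟩
      have h1 := hxw s
      rw [hgx, hgs] at h1
      have h2 : gx + w₀ ⬝ᵥ (s - x) ≤ gs := by exact_mod_cast h1
      rw [hgs, ← EReal.coe_sub, EReal.coe_le_coe_iff]
      have h3 : w₀ ⬝ᵥ (s - x) = w₀ ⬝ᵥ s - w₀ ⬝ᵥ x := dotProduct_sub w₀ s x
      linarith [h2, h3.symm.le]
  have hlb : ∀ u : Fin p → ℝ, ((u ⬝ᵥ x - gx : ℝ) : EReal) ≤ fconj g u := by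
    intro u
    have := le_iSup (fun s => ((u ⬝ᵥ s : ℝ) : EReal) - g s) x
    rwa [hgx, ← EReal.coe_sub] at this
  have hfw₀ : fconj g w₀ = ((w₀ ⬝ᵥ x - gx : ℝ) : EReal) :=
    le_antisymm (iSup_le hub) (hlb w₀)
  -- the subgradient vector simplifies
  have hv₀ : -(Q⁻¹ *ᵥ (w₀ - y)) = b + x := by
    have h1 : w₀ - y = Q *ᵥ (-(b + x)) := by
      rw [Matrix.mulVec_neg, Matrix.mulVec_add, hw₀]; abel
    rw [h1, hQinv, neg_neg]
  have claim1 : (b + x) ∈ subdiff (fun yy => fconj g yy + ((b ⬝ᵥ yy : ℝ) : EReal)) w₀ := by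
    intro u
    simp only [hfw₀]
    have heq : ((w₀ ⬝ᵥ x - gx : ℝ) : EReal) + ((b ⬝ᵥ w₀ : ℝ) : EReal)
        + (((b + x) ⬝ᵥ (u - w₀) : ℝ) : EReal)
        = ((u ⬝ᵥ x - gx : ℝ) : EReal) + ((b ⬝ᵥ u : ℝ) : EReal) := by
      rw [← EReal.coe_add, ← EReal.coe_add, ← EReal.coe_add, EReal.coe_eq_coe_iff]
      simp only [add_dotProduct, dotProduct_sub]
      rw [dotProduct_comm x u, dotProduct_comm x w₀]
      ring
    rw [heq]
    exact add_le_add_left (hlb u) _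
  refine ⟨by rw [hv₀]; exact claim1, ?_⟩
  intro w hw
  obtain ⟨v, hv⟩ : ∃ v, v = -(Q⁻¹ *ᵥ (w - y)) := ⟨_, rfl⟩
  rw [← hv] at hw
  -- finiteness of fconj g w
  have hfwnb : fconj g w ≠ ⊥ := ((EReal.bot_lt_coe _).trans_le (hlb w)).ne'
  have hfwnt : fconj g w ≠ ⊤ := by
    intro h
    have h1 := hw w₀
    simp only [h, EReal.top_add_coe] at h1
    rw [hfw₀, ← EReal.coe_add] at h1
    exact (EReal.coe_ne_top _) (top_le_iff.mp h1)
  obtain ⟨fw, hfw⟩ : ∃ r : ℝ, fconj g w = (r : EReal) :=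
    ⟨(fconj g w).toReal, (EReal.coe_toReal hfwnt hfwnb).symm⟩
  have h2 := hw w₀
  have h3 := claim1 w
  simp only [hfw, hfw₀, ← EReal.coe_add] at h2 h3
  have h2' : fw + b ⬝ᵥ w + v ⬝ᵥ (w₀ - w) ≤ w₀ ⬝ᵥ x - gx + b ⬝ᵥ w₀ := by exact_mod_cast h2
  have h3' : w₀ ⬝ᵥ x - gx + b ⬝ᵥ w₀ + (b + x) ⬝ᵥ (w - w₀) ≤ fw + b ⬝ᵥ w := by exact_mod_cast h3
  have hkey : (Q⁻¹ *ᵥ (w₀ - w)) ⬝ᵥ (w₀ - w) ≤ 0 := by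
    have e1 : v - (b + x) = Q⁻¹ *ᵥ (w₀ - w) := by
      rw [hv, ← hv₀, Matrix.mulVec_sub Q⁻¹ w y, Matrix.mulVec_sub Q⁻¹ w₀ y,
        Matrix.mulVec_sub Q⁻¹ w₀ w]
      abel
    have e2 : (v - (b + x)) ⬝ᵥ (w₀ - w) = v ⬝ᵥ (w₀ - w) + (b + x) ⬝ᵥ (w - w₀) := by
      simp only [sub_dotProduct, dotProduct_sub]
      ring
    rw [← e1, e2]
    linarith
  have hd : w₀ - w = 0 := by
    by_contra hd0
    have hpos := (hQ.inv).dotProduct_mulVec_pos hd0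
    rw [dotProduct_comm] at hkey
    simp only [star_trivial] at hpos
    linarith
  exact (sub_eq_zero.mp hd).symm
end
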